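/- Let n ≥ 2 and r, s > 0. Define p(u,v) = ½φ(u)φ(v - √(2(r+s)log n)) + ½φ(u)φ(v + √(2(r+s)log n)) and q(u,v) = ½φ(u - √(2r log n))φ(v - √(2s log n)) + ½φ(u + √(2r log n))φ(v + √(2s log n)), where φ is the standard normal density. Then for all u, v ∈ ℝ, |log(q(u,v)/p(u,v)) - √(2 log n)·(|√r·u + √s·v| - √(r+s)·|v|)| ≤ log 2. -/

import Mathlib

/-!
Shifting a standard Gaussian tilts it exponentially, `φ(x ∓ a) = φ(x) e^{±ax - a²/2}`, so the
symmetric mixture `½ φ(u - a) φ(v - b) + ½ φ(u + a) φ(v + b)` equals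
`φ(u) φ(v) e^{-(a² + b²)/2} cosh(au + bv)`. Both `q` and `p` are such mixtures, with shift vectors
`√(2 log n) (√r, √s)` and `√(2 log n) (0, √(r + s))` of the same length, so the Gaussian factors
cancel in `q / p` and `log (q / p) = log cosh(au + bv) - log cosh(cv)`. Finally `log cosh t` lies
between `|t| - log 2` and `|t|`.
-/

noncomputable def stdNormalPDF (x : ℝ) : ℝ :=
  (Real.sqrt (2 * Real.pi))⁻¹ * Real.exp (-x ^ 2 / 2)

open Real

lemma stdNormalPDF_pos (x : ℝ) : 0 < stdNormalPDF x := by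
  unfold stdNormalPDF
  positivity

lemma stdNormalPDF_sub (x a : ℝ) :
    stdNormalPDF (x - a) = stdNormalPDF x * exp (a * x - a ^ 2 / 2) := by
  rw [stdNormalPDF, stdNormalPDF, mul_assoc, ← exp_add]
  ring_nf

lemma stdNormalPDF_add (x a : ℝ) :
    stdNormalPDF (x + a) = stdNormalPDF x * exp (-(a * x) - a ^ 2 / 2) := by
  simpa [neg_mul] using stdNormalPDF_sub x (-a)

noncomputable def symmGaussianMixture (a b u v : ℝ) : ℝ :=
  1 / 2 * stdNormalPDF (u - a) * stdNormalPDF (v - b) +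
    1 / 2 * stdNormalPDF (u + a) * stdNormalPDF (v + b)

lemma symmGaussianMixture_eq (a b u v : ℝ) :
    symmGaussianMixture a b u v =
      stdNormalPDF u * stdNormalPDF v * exp (-(a ^ 2 + b ^ 2) / 2) * cosh (a * u + b * v) := by
  have tilt_pos : exp (a * u - a ^ 2 / 2) * exp (b * v - b ^ 2 / 2) =
      exp (-(a ^ 2 + b ^ 2) / 2) * exp (a * u + b * v) := by
    rw [← exp_add, ← exp_add]
    ring_nf
  have tilt_neg : exp (-(a * u) - a ^ 2 / 2) * exp (-(b * v) - b ^ 2 / 2) =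
      exp (-(a ^ 2 + b ^ 2) / 2) * exp (-(a * u + b * v)) := by
    rw [← exp_add, ← exp_add]
    ring_nf
  rw [symmGaussianMixture, stdNormalPDF_sub, stdNormalPDF_sub, stdNormalPDF_add, stdNormalPDF_add,
    cosh_eq]
  linear_combination (stdNormalPDF u * stdNormalPDF v / 2) * (tilt_pos + tilt_neg)

lemma log_symmGaussianMixture_div {a b a' b' : ℝ} (h : a ^ 2 + b ^ 2 = a' ^ 2 + b' ^ 2)
    (u v : ℝ) :
    log (symmGaussianMixture a b u v / symmGaussianMixture a' b' u v) =
      log (cosh (a * u + b * v)) - log (cosh (a' * u + b' * v)) := by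
  have hC : stdNormalPDF u * stdNormalPDF v * exp (-(a' ^ 2 + b' ^ 2) / 2) ≠ 0 :=
    (mul_pos (mul_pos (stdNormalPDF_pos u) (stdNormalPDF_pos v)) (exp_pos _)).ne'
  rw [symmGaussianMixture_eq, symmGaussianMixture_eq, h, mul_div_mul_left _ _ hC,
    log_div (cosh_pos _).ne' (cosh_pos _).ne']

lemma log_cosh_le_abs (t : ℝ) : log (cosh t) ≤ |t| := by
  have cosh_le : cosh t ≤ exp |t| := by
    rw [← cosh_abs, cosh_eq]
    linarith [exp_le_exp.2 (neg_le_self (abs_nonneg t))]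
  simpa using log_le_log (cosh_pos t) cosh_le

lemma abs_sub_log_two_le_log_cosh (t : ℝ) : |t| - log 2 ≤ log (cosh t) := by
  have le_cosh : exp |t| / 2 ≤ cosh t := by
    rw [cosh_eq]
    linarith [exp_abs_le t]
  simpa [log_div (exp_pos _).ne' two_ne_zero] using log_le_log (by positivity) le_cosh

lemma abs_log_cosh_sub_log_cosh_sub_le (x y : ℝ) :
    |log (cosh x) - log (cosh y) - (|x| - |y|)| ≤ log 2 :=
  calc |log (cosh x) - log (cosh y) - (|x| - |y|)|
      = |(|y| - log (cosh y)) - (|x| - log (cosh x))| := by ring_nf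
    _ ≤ log 2 := abs_sub_le_of_nonneg_of_le
      (sub_nonneg.2 (log_cosh_le_abs y)) (by linarith [abs_sub_log_two_le_log_cosh y])
      (sub_nonneg.2 (log_cosh_le_abs x)) (by linarith [abs_sub_log_two_le_log_cosh x])

theorem lr_approx_general (n : ℕ) (r s : ℝ) (hr : 0 < r) (hs : 0 < s) (u v : ℝ) :
    let L := Real.log n
    let p : ℝ → ℝ → ℝ := fun u v =>
      1 / 2 * stdNormalPDF u * stdNormalPDF (v - Real.sqrt (2 * (r + s) * L)) +
      1 / 2 * stdNormalPDF u * stdNormalPDF (v + Real.sqrt (2 * (r + s) * L))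
    let q : ℝ → ℝ → ℝ := fun u v =>
      1 / 2 * stdNormalPDF (u - Real.sqrt (2 * r * L)) * stdNormalPDF (v - Real.sqrt (2 * s * L)) +
      1 / 2 * stdNormalPDF (u + Real.sqrt (2 * r * L)) * stdNormalPDF (v + Real.sqrt (2 * s * L))
    |Real.log (q u v / p u v) -
        Real.sqrt (2 * L) *
          (|Real.sqrt r * u + Real.sqrt s * v| - Real.sqrt (r + s) * |v|)| ≤ Real.log 2 := by
  intro L p q
  set k := √(2 * L)
  have hk : 0 ≤ k := sqrt_nonneg _
  have sqrt_eq (t : ℝ) : √(2 * t * L) = k * √t := by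
    rw [mul_right_comm, sqrt_mul (mul_nonneg zero_le_two (log_natCast_nonneg n))]
  have hq : q u v = symmGaussianMixture (k * √r) (k * √s) u v := by
    simp only [q, symmGaussianMixture, sqrt_eq]
  have hp : p u v = symmGaussianMixture 0 (k * √(r + s)) u v := by
    simp only [p, symmGaussianMixture, sqrt_eq, sub_zero, add_zero]
  have same_length : (k * √r) ^ 2 + (k * √s) ^ 2 = 0 ^ 2 + (k * √(r + s)) ^ 2 := by
    rw [mul_pow, mul_pow, mul_pow, sq_sqrt hr.le, sq_sqrt hs.le, sq_sqrt (add_pos hr hs).le]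
    ring
  rw [hq, hp, log_symmGaussianMixture_div same_length]
  convert abs_log_cosh_sub_log_cosh_sub_le (k * √r * u + k * √s * v) (0 * u + k * √(r + s) * v)
    using 3
  rw [zero_mul, zero_add, abs_mul, abs_of_nonneg (mul_nonneg hk (sqrt_nonneg _)),
    show k * √r * u + k * √s * v = k * (√r * u + √s * v) by ring, abs_mul, abs_of_nonneg hk]
  ring

theorem lr_approx (n : ℕ) (hn : 2 ≤ n) (r s : ℝ) (hr : 0 < r) (hs : 0 < s) (u v : ℝ) :
    let L := Real.log n
    let p : ℝ → ℝ → ℝ := fun u v =>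
      1 / 2 * stdNormalPDF u * stdNormalPDF (v - Real.sqrt (2 * (r + s) * L)) +
      1 / 2 * stdNormalPDF u * stdNormalPDF (v + Real.sqrt (2 * (r + s) * L))
    let q : ℝ → ℝ → ℝ := fun u v =>
      1 / 2 * stdNormalPDF (u - Real.sqrt (2 * r * L)) * stdNormalPDF (v - Real.sqrt (2 * s * L)) +
      1 / 2 * stdNormalPDF (u + Real.sqrt (2 * r * L)) * stdNormalPDF (v + Real.sqrt (2 * s * L))
    |Real.log (q u v / p u v) -
        Real.sqrt (2 * L) *
          (|Real.sqrt r * u + Real.sqrt s * v| - Real.sqrt (r + s) * |v|)| ≤ Real.log 2 :=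
  lr_approx_general n r s hr hs u v
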